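/- arXiv:0707.2849 — 6 statements merged into one kernel-verified Lean document; each statement's English description precedes it below -/
import Mathlib

section
/- Let p be an odd prime and let f : ℤ_p → ℚ_p be continuous. Then the fermionic p-adic integral of f exists (i.e. the sequence N ↦ Σ_{x=0}^{p^N − 1} (−1)^x f(x) converges in ℚ_p as N → ∞), the fermionic integral of the shifted function f₁(x) = f(x+1) also exists, and I_{−1}(f₁) + I_{−1}(f) = 2·f(0). -/
/-!
Split `Σ_{x < p^{N+1}}` into `p` blocks of length `p^N`; since `p^N` is odd, the `j`-th block is
`(-1)^j` times `Σ_{y < p^N} (-1)^y f(j p^N + y)`, and since `Σ_{j < p} (-1)^j = 1` the difference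
of consecutive partial sums is `Σ_j (-1)^j Σ_y (-1)^y (f(j p^N + y) - f(y))`. By uniform
continuity and the ultrametric inequality it tends to `0`, so the partial sums converge in the
complete nonarchimedean field `ℚ_p`. The shift identity comes from telescoping:
`Σ_{x < n} (-1)^x (f(x+1) + f(x)) = f(0) + f(n)` for odd `n`, and `f(p^N) → f(0)`.
-/

open Filter Finset Topology

theorem Finset.sum_range_mul_eq_sum_sum {M : Type*} [AddCommMonoid M] (g : ℕ → M) (m n : ℕ) :
    ∑ x ∈ range (m * n), g x = ∑ j ∈ range m, ∑ y ∈ range n, g (j * n + y) := by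
  induction m with
  | zero => simp
  | succ m ih => rw [Nat.succ_mul, sum_range_add, ih, sum_range_succ]

section Alternating

variable {R : Type*} [CommRing R]

theorem sum_range_mul_neg_one_pow_of_odd {n : ℕ} (hn : Odd n) (g : ℕ → R) (m : ℕ) :
    ∑ x ∈ range (m * n), (-1) ^ x * g x
      = ∑ j ∈ range m, (-1) ^ j * ∑ y ∈ range n, (-1) ^ y * g (j * n + y) := by
  rw [sum_range_mul_eq_sum_sum]
  refine sum_congr rfl fun j _ => ?_
  rw [mul_sum]
  refine sum_congr rfl fun y _ => ?_
  rw [pow_add, pow_mul', hn.neg_one_pow, mul_assoc]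

theorem sum_range_neg_one_pow_mul_succ_add_of_odd {n : ℕ} (hn : Odd n) (g : ℕ → R) :
    ∑ x ∈ range n, (-1) ^ x * (g (x + 1) + g x) = g 0 + g n := by
  calc ∑ x ∈ range n, (-1) ^ x * (g (x + 1) + g x)
      = ∑ x ∈ range n, ((-1) ^ x * g x - (-1) ^ (x + 1) * g (x + 1)) :=
        sum_congr rfl fun x _ => by ring
    _ = (-1) ^ 0 * g 0 - (-1) ^ n * g n := sum_range_sub' (fun x => (-1) ^ x * g x) n
    _ = g 0 + g n := by rw [hn.neg_one_pow]; ring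

end Alternating

theorem PadicInt.tendsto_pow_p_atTop_nhds_zero (p : ℕ) [Fact p.Prime] :
    Tendsto (fun N : ℕ => (p : ℤ_[p]) ^ N) atTop (𝓝 0) := by
  refine tendsto_pow_atTop_nhds_zero_of_norm_lt_one ?_
  rw [PadicInt.norm_p]
  exact inv_lt_one_of_one_lt₀ (mod_cast (Fact.out : p.Prime).one_lt)

noncomputable def fermionicSum {E : Type*} [Ring E] (p : ℕ) [Fact p.Prime] (f : ℤ_[p] → E)
    (N : ℕ) : E :=
  ∑ x ∈ range (p ^ N), (-1) ^ x * f x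

namespace fermionicSum

variable {p : ℕ} [Fact p.Prime]

theorem succ_sub {E : Type*} [CommRing E] (hp : Odd p) (f : ℤ_[p] → E) (N : ℕ) :
    fermionicSum p f (N + 1) - fermionicSum p f N
      = ∑ j ∈ range p, (-1) ^ j *
          ∑ y ∈ range (p ^ N), (-1) ^ y * (f ((y : ℤ_[p]) + p ^ N * j) - f y) := by
  have hblock := sum_range_mul_neg_one_pow_of_odd hp.pow (fun x => f (x : ℤ_[p])) p
    (n := p ^ N)
  have hgeom : ∑ j ∈ range p, (-1 : E) ^ j = 1 := by
    rw [neg_one_geom_sum, if_neg (Nat.not_even_iff_odd.mpr hp)]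
  simp only [mul_sub, sum_sub_distrib, ← sum_mul, hgeom, one_mul]
  rw [fermionicSum, fermionicSum, pow_succ', hblock]
  congr 1
  refine sum_congr rfl fun j _ => ?_
  congr 1
  refine sum_congr rfl fun y _ => ?_
  push_cast
  rw [add_comm ((j : ℤ_[p]) * _), mul_comm (j : ℤ_[p])]

theorem shift_add {E : Type*} [CommRing E] (hp : Odd p) (f : ℤ_[p] → E) (N : ℕ) :
    fermionicSum p (fun x => f (x + 1)) N + fermionicSum p f N = f 0 + f (p ^ N) := by
  rw [fermionicSum, fermionicSum, ← sum_add_distrib]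
  simp only [← mul_add]
  exact_mod_cast
    sum_range_neg_one_pow_mul_succ_add_of_odd (hp.pow (n := N)) fun x => f (x : ℤ_[p])

variable {E : Type*} [NormedField E] [IsUltrametricDist E]

theorem norm_succ_sub_le (hp : Odd p) {f : ℤ_[p] → E} {N : ℕ} {ε : ℝ} (hε : 0 ≤ ε)
    (hf : ∀ x z : ℤ_[p], ‖f (x + p ^ N * z) - f x‖ ≤ ε) :
    ‖fermionicSum p f (N + 1) - fermionicSum p f N‖ ≤ ε := by
  rw [succ_sub hp]
  refine IsUltrametricDist.norm_sum_le_of_forall_le_of_nonneg hε fun j _ => ?_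
  rw [norm_mul, norm_pow, norm_neg, norm_one, one_pow, one_mul]
  refine IsUltrametricDist.norm_sum_le_of_forall_le_of_nonneg hε fun y _ => ?_
  rw [norm_mul, norm_pow, norm_neg, norm_one, one_pow, one_mul]
  exact hf _ _

theorem tendsto_succ_sub (hp : Odd p) {f : ℤ_[p] → E} (hf : Continuous f) :
    Tendsto (fun N => fermionicSum p f (N + 1) - fermionicSum p f N) atTop (𝓝 0) := by
  rw [Metric.tendsto_atTop]
  intro ε hε
  obtain ⟨δ, hδ, hfδ⟩ :=
    Metric.uniformContinuous_iff.mp (CompactSpace.uniformContinuous_of_continuous hf) (ε / 2)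
      (half_pos hε)
  obtain ⟨N₀, hN₀⟩ :=
    Metric.tendsto_atTop.mp (PadicInt.tendsto_pow_p_atTop_nhds_zero p) δ hδ
  refine ⟨N₀, fun N hN => ?_⟩
  rw [dist_zero_right]
  refine (norm_succ_sub_le hp (half_pos hε).le fun x z => ?_).trans_lt (half_lt_self hε)
  rw [← dist_eq_norm]
  refine (hfδ ?_).le
  calc dist (x + p ^ N * z) x = ‖(p : ℤ_[p]) ^ N * z‖ := by
        rw [dist_eq_norm, add_sub_cancel_left]
    _ ≤ ‖(p : ℤ_[p]) ^ N‖ := by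
      rw [norm_mul]; exact mul_le_of_le_one_right (norm_nonneg _) (PadicInt.norm_le_one z)
    _ < δ := by simpa using hN₀ N hN

end fermionicSum

/-- For an odd prime `p` and a continuous `f : ℤ_[p] → ℚ_[p]`, the fermionic `p`-adic
integral `I_{-1}(f) = lim_N Σ_{x=0}^{p^N-1} (-1)^x f(x)` exists, the integral of the
shift `f₁(x) = f(x+1)` exists, and `I_{-1}(f₁) + I_{-1}(f) = 2 f(0)`. -/
theorem fermionic_integral_exists_and_shift (p : ℕ) [Fact p.Prime] (hp : Odd p)
    (f : ℤ_[p] → ℚ_[p]) (hf : Continuous f) :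
    ∃ I I₁ : ℚ_[p],
      Filter.Tendsto
        (fun N : ℕ => ∑ x ∈ Finset.range (p ^ N), (-1 : ℚ_[p]) ^ x * f (x : ℤ_[p]))
        Filter.atTop (nhds I) ∧
      Filter.Tendsto
        (fun N : ℕ => ∑ x ∈ Finset.range (p ^ N), (-1 : ℚ_[p]) ^ x * f ((x : ℤ_[p]) + 1))
        Filter.atTop (nhds I₁) ∧
      I₁ + I = 2 * f 0 := by
  obtain ⟨I, hI⟩ : ∃ I, Tendsto (fermionicSum p f) atTop (𝓝 I) :=
    cauchySeq_tendsto_of_complete <| NonarchimedeanAddGroup.cauchySeq_of_tendsto_sub_nhds_zero <|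
      fermionicSum.tendsto_succ_sub hp hf
  have hboundary : Tendsto (fun N => f 0 + f ((p : ℤ_[p]) ^ N)) atTop (𝓝 (f 0 + f 0)) :=
    tendsto_const_nhds.add ((hf.tendsto 0).comp (PadicInt.tendsto_pow_p_atTop_nhds_zero p))
  have hshift : Tendsto (fermionicSum p fun x => f (x + 1)) atTop (𝓝 (f 0 + f 0 - I)) := by
    refine (hboundary.sub hI).congr fun N => ?_
    rw [← fermionicSum.shift_add hp, add_sub_cancel_right]
  exact ⟨I, f 0 + f 0 - I, hI, hshift, by ring⟩
end

section
/- Let p be an odd prime, h an integer, and q ∈ ℤ_p with |q − 1|_p < 1 (so q is a unit and q^h is defined). Let (E_n)_{n≥0} be the unique sequence in ℚ_p satisfying q^h · Σ_{k=0}^{n} C(n,k) E_k + E_n = 2·δ_{n,0} for all n ≥ 0. Then for every n ≥ 0, the limit lim_{N→∞} Σ_{x=0}^{p^N − 1} (−1)^x q^{h x} x^n exists in ℚ_p and equals E_n (Witt's formula for the (h,q)-Euler numbers). -/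
/-!
Let `E_n(x) = Σ_k C(n,k) E_k x^(n-k)` be the Appell polynomials of `E` (for the `(h,q)`-Euler
numbers, the `(h,q)`-Euler polynomials). The recurrence says `q^h E_n(1) + E_n(0) = 2 δ_{n,0}`, and
the Appell shift identity `E_n(x + y) = Σ_j C(n,j) E_j(x) y^(n-j)` upgrades it to
`q^h E_n(x + 1) + E_n(x) = 2 x^n`. Telescoping over `x < M` gives
`2 Σ_{x<M} (-q^h)^x x^n = E_n - (-q^h)^M E_n(M)`. For `M = p^N`, which is odd, the right side is
`E_n + q^(h p^N) E_n(p^N)`; `p`-adically `p^N → 0`, and `q^(h p^N) → 1` because `q^h ≡ 1 mod p`.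
-/

open Finset Filter Topology

section Appell
variable {R : Type*} [CommSemiring R]

def appell (E : ℕ → R) (n : ℕ) (x : R) : R :=
  ∑ k ∈ range (n + 1), (n.choose k : R) * E k * x ^ (n - k)

theorem appell_zero_right (E : ℕ → R) (n : ℕ) : appell E n 0 = E n := by
  rw [appell, sum_eq_single_of_mem n (self_mem_range_succ n)]
  · simp
  · intro k hk hkn
    rw [zero_pow (by grind), mul_zero]

theorem appell_one_right (E : ℕ → R) (n : ℕ) :
    appell E n 1 = ∑ k ∈ range (n + 1), (n.choose k : R) * E k := by
  simp [appell]

theorem appell_add (E : ℕ → R) (n : ℕ) (x y : R) :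
    appell E n (x + y) = ∑ j ∈ range (n + 1), (n.choose j : R) * appell E j x * y ^ (n - j) := by
  have hchoose : ∀ k i, k + i ≤ n →
      (n.choose (k + i) * (k + i).choose k : R) = n.choose k * (n - k).choose i := by
    intro k i hki
    rw [← Nat.cast_mul, Nat.choose_mul (Nat.le_add_right k i), Nat.add_sub_cancel_left,
      Nat.cast_mul]
  calc appell E n (x + y)
      = ∑ k ∈ range (n + 1), ∑ i ∈ range (n - k + 1),
          (n.choose (k + i) * (k + i).choose k : R) * E k * x ^ i * y ^ (n - (k + i)) := by
        refine sum_congr rfl fun k hk => ?_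
        rw [add_pow, mul_sum]
        refine sum_congr rfl fun i hi => ?_
        rw [hchoose k i (by grind), Nat.sub_add_eq]
        ring
    _ = ∑ k ∈ range (n + 1), ∑ j ∈ Ico k (n + 1),
          (n.choose j * j.choose k : R) * E k * x ^ (j - k) * y ^ (n - j) := by
        refine sum_congr rfl fun k hk => ?_
        rw [sum_Ico_eq_sum_range, show n + 1 - k = n - k + 1 by grind]
        simp only [Nat.add_sub_cancel_left]
    _ = ∑ j ∈ range (n + 1), ∑ k ∈ range (j + 1),
          (n.choose j * j.choose k : R) * E k * x ^ (j - k) * y ^ (n - j) := by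
        simp only [range_eq_Ico]
        exact sum_Ico_Ico_comm 0 (n + 1) _
    _ = _ := by
        refine sum_congr rfl fun j _ => ?_
        rw [appell, mul_sum, sum_mul]
        refine sum_congr rfl fun k _ => ?_
        ring

theorem appell_add_one (E : ℕ → R) (Q c : R)
    (hE : ∀ j, Q * appell E j 1 + E j = c * if j = 0 then 1 else 0) (n : ℕ) (t : R) :
    Q * appell E n (t + 1) + appell E n t = c * t ^ n := by
  rw [add_comm t]
  have hsplit : appell E n t = ∑ j ∈ range (n + 1), (n.choose j : R) * E j * t ^ (n - j) := rfl
  calc Q * appell E n (1 + t) + appell E n t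
      = ∑ j ∈ range (n + 1), (n.choose j * t ^ (n - j) : R) * (Q * appell E j 1 + E j) := by
        rw [appell_add, hsplit, mul_sum, ← sum_add_distrib]
        exact sum_congr rfl fun j _ => by ring
    _ = c * t ^ n := by simp [hE, mul_comm c]

theorem continuous_appell [TopologicalSpace R] [IsTopologicalSemiring R] (E : ℕ → R) (n : ℕ) :
    Continuous (appell E n) :=
  continuous_finsetSum _ fun _ _ => continuous_const.mul (continuous_pow _)

end Appell

theorem mul_sum_neg_pow_mul_pow_eq {R : Type*} [CommRing R] (E : ℕ → R) (Q c : R)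
    (hE : ∀ j, Q * appell E j 1 + E j = c * if j = 0 then 1 else 0) (n M : ℕ) :
    c * ∑ x ∈ range M, (-Q) ^ x * (x : R) ^ n = E n - (-Q) ^ M * appell E n M := by
  induction M with
  | zero => simp [appell_zero_right]
  | succ M ih =>
    rw [sum_range_succ, mul_add, ih]
    push_cast
    linear_combination -(-Q) ^ M * appell_add_one E Q c hE n M

theorem Units.sub_one_dvd_zpow_sub_one {R : Type*} [CommRing R] (u : Rˣ) (h : ℤ) :
    (u : R) - 1 ∣ ((u ^ h : Rˣ) : R) - 1 := by
  obtain ⟨n, rfl | rfl⟩ := h.eq_nat_or_neg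
  · simpa using sub_one_dvd_pow_sub_one (u : R) n
  · rw [zpow_neg, zpow_natCast]
    have hinv : (↑(u ^ n)⁻¹ : R) - 1 = -↑(u ^ n)⁻¹ * (↑(u ^ n) - 1) := by
      linear_combination (u ^ n).inv_mul
    rw [hinv, Units.val_pow_eq_pow_val]
    exact (sub_one_dvd_pow_sub_one _ n).mul_left _

namespace PadicInt
variable {p : ℕ} [Fact p.Prime]

theorem tendsto_pow_prime_pow_of_dvd_sub_one {v : ℤ_[p]} (hv : (p : ℤ_[p]) ∣ v - 1) :
    Tendsto (fun N => v ^ p ^ N) atTop (𝓝 1) := by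
  rw [tendsto_iff_norm_sub_tendsto_zero]
  have hp : Tendsto (fun N : ℕ => ‖(p : ℤ_[p])‖ ^ (N + 1)) atTop (𝓝 0) :=
    (tendsto_pow_atTop_nhds_zero_of_lt_one (norm_nonneg _) ((norm_lt_one_iff_dvd _).2 dvd_rfl)).comp
      (tendsto_add_atTop_nat 1)
  refine squeeze_zero (fun _ => norm_nonneg _) (fun N => ?_) hp
  obtain ⟨w, hw⟩ := dvd_sub_pow_of_dvd_sub (b := (1 : ℤ_[p])) (by simpa using hv) N
  rw [one_pow] at hw
  rw [hw, norm_mul, norm_pow]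
  exact mul_le_of_le_one_right (by positivity) w.norm_le_one

theorem tendsto_zpow_pow_prime_pow {q : ℤ_[p]} (hq : ‖q - 1‖ < 1) (h : ℤ) :
    Tendsto (fun N => ((q : ℚ_[p]) ^ h) ^ p ^ N) atTop (𝓝 1) := by
  obtain ⟨u, rfl⟩ : IsUnit q := by
    simpa using IsLocalRing.isUnit_one_sub_self_of_mem_nonunits (1 - q)
      (mem_nonunits.2 (by rwa [norm_sub_rev]))
  have hcast : ((u : ℤ_[p]) : ℚ_[p]) ^ h = (((u ^ h : ℤ_[p]ˣ) : ℤ_[p]) : ℚ_[p]) := by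
    have := map_zpow (Units.map (Coe.ringHom : ℤ_[p] →+* ℚ_[p]).toMonoidHom) u h
    rw [← Units.val_inj, Units.val_zpow_eq_zpow_val] at this
    exact this.symm
  have hdvd : (p : ℤ_[p]) ∣ ((u ^ h : ℤ_[p]ˣ) : ℤ_[p]) - 1 :=
    ((norm_lt_one_iff_dvd _).1 hq).trans (u.sub_one_dvd_zpow_sub_one h)
  rw [hcast]
  exact (continuous_subtype_val.tendsto (1 : ℤ_[p])).comp
    (tendsto_pow_prime_pow_of_dvd_sub_one hdvd)

end PadicInt

/-- Witt's formula for the `(h,q)`-Euler numbers: for an odd prime `p`, `h : ℤ` and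
`q ∈ ℤ_[p]` with `‖q - 1‖ < 1`, the sequence `E` determined by the recurrence
`q^h · Σ_{k≤n} C(n,k) E_k + E_n = 2·δ_{n,0}` is represented by the fermionic
`p`-adic integral: `lim_N Σ_{x<p^N} (-1)^x q^{hx} x^n = E_n`. -/
theorem witt_formula_hq_euler_numbers (p : ℕ) [Fact p.Prime] (hp : Odd p)
    (h : ℤ) (q : ℤ_[p]) (hq : ‖q - 1‖ < 1) (E : ℕ → ℚ_[p])
    (hE : ∀ n : ℕ,
      ((q : ℚ_[p]) ^ h) * (∑ k ∈ Finset.range (n + 1), (n.choose k : ℚ_[p]) * E k) + E n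
        = 2 * if n = 0 then 1 else 0) :
    ∀ n : ℕ, Filter.Tendsto
      (fun N : ℕ => ∑ x ∈ Finset.range (p ^ N),
        (-1 : ℚ_[p]) ^ x * ((q : ℚ_[p]) ^ h) ^ x * (x : ℚ_[p]) ^ n)
      Filter.atTop (nhds (E n)) := by
  intro n
  set Q := (q : ℚ_[p]) ^ h
  have hrec (j : ℕ) : Q * appell E j 1 + E j = 2 * if j = 0 then 1 else 0 := by
    rw [appell_one_right]; exact hE j
  have hQ : Tendsto (fun N => Q ^ p ^ N) atTop (𝓝 1) := PadicInt.tendsto_zpow_pow_prime_pow hq h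
  have hP : Tendsto (fun N => appell E n ((p ^ N : ℕ) : ℚ_[p])) atTop (𝓝 (E n)) := by
    simpa [appell_zero_right, Function.comp_def] using ((continuous_appell E n).tendsto 0).comp
      (tendsto_pow_atTop_nhds_zero_of_norm_lt_one Padic.norm_p_lt_one)
  have hsum (N : ℕ) : ∑ x ∈ range (p ^ N), (-1 : ℚ_[p]) ^ x * Q ^ x * (x : ℚ_[p]) ^ n
      = 2⁻¹ * (E n + Q ^ p ^ N * appell E n ((p ^ N : ℕ) : ℚ_[p])) := by
    have := mul_sum_neg_pow_mul_pow_eq E Q 2 hrec n (p ^ N)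
    rw [(hp.pow : Odd (p ^ N)).neg_pow] at this
    simp only [neg_pow Q] at this
    linear_combination 2⁻¹ * this
  have hlim := (tendsto_const_nhds (x := E n)).add (hQ.mul hP) |>.const_mul (2⁻¹ : ℚ_[p])
  rw [one_mul, ← two_mul, inv_mul_cancel_left₀ two_ne_zero] at hlim
  simpa only [hsum] using hlim
end

section
/- Let p be an odd prime, h an integer, q ∈ ℤ_p with |q − 1|_p < 1, and x ∈ ℤ_p. Let (E_n)_{n≥0} be the unique sequence in ℚ_p satisfying q^h · Σ_{k=0}^{n} C(n,k) E_k + E_n = 2·δ_{n,0} for all n ≥ 0, and set E_n(x) = Σ_{l=0}^{n} C(n,l) x^{n−l} E_l. Then for every n ≥ 0, the limit lim_{N→∞} Σ_{y=0}^{p^N − 1} (−1)^y q^{h y} (x + y)^n exists in ℚ_p and equals E_n(x) (Witt's formula for the (h,q)-Euler polynomials). -/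
/-!
Put `Q = q^h` and `S_N(m) = Σ_{y < p^N} (-Q)^y y^m`. Shifting `y ↦ y + 1` telescopes, and since
`p^N` is odd this gives `Q · Σ_k C(m,k) S_N(k) + S_N(m) = δ_{m,0} + Q^{p^N} p^{Nm}`: the recurrence
of the `(h,q)`-Euler numbers, up to a right-hand side that tends to `2 δ_{m,0}` because
`q^{p^N} → 1` p-adically. The recurrence is triangular with diagonal coefficient `Q + 1 ≠ 0`, so
its solution depends continuously on the right-hand side and `S_N(m) → E_m`. Expanding
`(x + y)^n` binomially turns this into the claim.
-/

open Filter Topology Finset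

theorem PadicInt.tendsto_pow_prime_pow_of_norm_sub_one_lt_one {p : ℕ} [Fact p.Prime]
    {q : ℤ_[p]} (hq : ‖q - 1‖ < 1) : Tendsto (fun N : ℕ => q ^ p ^ N) atTop (𝓝 1) := by
  have hdvd : ∀ N : ℕ, (p : ℤ_[p]) ^ (N + 1) ∣ q ^ p ^ N - 1 := fun N => by
    simpa using dvd_sub_pow_of_dvd_sub ((norm_lt_one_iff_dvd _).mp hq) N
  have hnorm : ∀ N : ℕ, ‖q ^ p ^ N - 1‖ ≤ ‖(p : ℤ_[p])‖ ^ (N + 1) := fun N => by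
    obtain ⟨d, hd⟩ := hdvd N
    rw [hd, norm_mul, norm_pow]
    exact mul_le_of_le_one_right (by positivity) d.norm_le_one
  rw [tendsto_iff_norm_sub_tendsto_zero]
  refine squeeze_zero (fun _ => norm_nonneg _) hnorm ?_
  exact (tendsto_pow_atTop_nhds_zero_of_lt_one (norm_nonneg _)
    ((norm_lt_one_iff_dvd (p : ℤ_[p])).mpr dvd_rfl)).comp (tendsto_add_atTop_nat 1)

theorem tendsto_zpow_pow_nhds_one {G₀ α : Type*} [GroupWithZero G₀] [TopologicalSpace G₀]
    [ContinuousMul G₀] [ContinuousInv₀ G₀] {l : Filter α} {s : α → ℕ} {v : G₀}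
    (hv : Tendsto (fun a => v ^ s a) l (𝓝 1)) (h : ℤ) :
    Tendsto (fun a => (v ^ h) ^ s a) l (𝓝 1) := by
  have hcomm : ∀ n : ℕ, (v ^ h) ^ n = (v ^ n) ^ h := fun n => by
    rw [← zpow_natCast, ← zpow_natCast, ← zpow_mul, ← zpow_mul, mul_comm]
  simpa only [hcomm, one_zpow] using hv.zpow₀ h (Or.inl one_ne_zero)

theorem add_one_ne_zero_of_tendsto_pow_odd {R α : Type*} [Ring R] [TopologicalSpace R]
    [T2Space R] [NeZero (2 : R)] {l : Filter α} [l.NeBot] {s : α → ℕ} (hs : ∀ a, Odd (s a))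
    {Q : R} (hQ : Tendsto (fun a => Q ^ s a) l (𝓝 1)) : Q + 1 ≠ 0 := by
  intro hQ1
  obtain rfl := eq_neg_of_add_eq_zero_left hQ1
  have h : (1 : R) = -1 :=
    tendsto_nhds_unique (by simpa only [(hs _).neg_one_pow] using hQ) tendsto_const_nhds
  refine two_ne_zero (α := R) ?_
  rw [← one_add_one_eq_two]
  nth_rw 1 [h]
  exact neg_add_cancel 1

section WeightedPowerSum

variable {R : Type*} [CommRing R]

/-- For `t = -q^h` and `M = p^N` this is the `N`-th approximation of the fermionic integral of
`q^{hy} y^m`. -/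
def weightedPowerSum (t : R) (M m : ℕ) : R := ∑ y ∈ range M, t ^ y * (y : R) ^ m

theorem sum_pow_mul_add_pow (t x : R) (M n : ℕ) :
    ∑ y ∈ range M, t ^ y * (x + y) ^ n =
      ∑ l ∈ range (n + 1), n.choose l * x ^ (n - l) * weightedPowerSum t M l := by
  simp only [weightedPowerSum, mul_sum]
  rw [sum_comm]
  refine sum_congr rfl fun y _ => ?_
  rw [add_comm x, add_pow, mul_sum]
  exact sum_congr rfl fun l _ => by ring

theorem mul_sum_choose_mul_weightedPowerSum (t : R) (M m : ℕ) :
    t * ∑ k ∈ range (m + 1), m.choose k * weightedPowerSum t M k =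
      weightedPowerSum t M m + t ^ M * M ^ m - 0 ^ m := by
  have hshift : t * ∑ k ∈ range (m + 1), m.choose k * weightedPowerSum t M k =
      ∑ y ∈ range M, t ^ (y + 1) * ((y + 1 : ℕ) : R) ^ m := by
    simp only [weightedPowerSum, mul_sum]
    rw [sum_comm]
    refine sum_congr rfl fun y _ => ?_
    rw [Nat.cast_succ, add_pow, mul_sum]
    exact sum_congr rfl fun k _ => by ring
  have h1 := sum_range_succ' (fun y => t ^ y * (y : R) ^ m) M
  have h2 := sum_range_succ (fun y => t ^ y * (y : R) ^ m) M
  rw [hshift, weightedPowerSum]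
  push_cast at h1 h2 ⊢
  linear_combination h2 - h1

theorem weightedPowerSum_neg_recurrence (Q : R) {M : ℕ} (hM : Odd M) (m : ℕ) :
    Q * ∑ k ∈ range (m + 1), m.choose k * weightedPowerSum (-Q) M k + weightedPowerSum (-Q) M m =
      0 ^ m + Q ^ M * M ^ m := by
  linear_combination -mul_sum_choose_mul_weightedPowerSum (-Q) M m - (hM.neg_pow Q) * (M : R) ^ m

end WeightedPowerSum

section BinomialRecurrence

variable {K : Type*} [Field K]

theorem eq_inv_mul_sub_of_add_one_ne_zero {Q : K} (hQ : Q + 1 ≠ 0) (b : ℕ → K) (m : ℕ) :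
    b m = (Q + 1)⁻¹ * (Q * ∑ k ∈ range (m + 1), m.choose k * b k + b m -
      Q * ∑ k ∈ range m, m.choose k * b k) := by
  rw [sum_range_succ, Nat.choose_self, Nat.cast_one, one_mul]
  field_simp
  ring

theorem tendsto_of_tendsto_binomial_recurrence [TopologicalSpace K] [IsTopologicalRing K]
    {α : Type*} {l : Filter α} {Q : K} (hQ : Q + 1 ≠ 0) {a : α → ℕ → K} {E : ℕ → K}
    (h : ∀ m, Tendsto (fun i => Q * ∑ k ∈ range (m + 1), m.choose k * a i k + a i m) l
      (𝓝 (Q * ∑ k ∈ range (m + 1), m.choose k * E k + E m))) (m : ℕ) :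
    Tendsto (fun i => a i m) l (𝓝 (E m)) := by
  induction m using Nat.strong_induction_on with
  | _ m ih =>
    have hlower : Tendsto (fun i => Q * ∑ k ∈ range m, m.choose k * a i k) l
        (𝓝 (Q * ∑ k ∈ range m, m.choose k * E k)) :=
      tendsto_const_nhds.mul <| tendsto_finsetSum _ fun k hk =>
        tendsto_const_nhds.mul (ih k (mem_range.mp hk))
    have hsolve := (tendsto_const_nhds (x := (Q + 1)⁻¹)).mul ((h m).sub hlower)
    rw [← eq_inv_mul_sub_of_add_one_ne_zero hQ E m] at hsolve
    exact hsolve.congr fun i => (eq_inv_mul_sub_of_add_one_ne_zero hQ (a i) m).symm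

end BinomialRecurrence

/-- Witt's formula for the `(h,q)`-Euler polynomials: for an odd prime `p`, `h : ℤ`,
`q ∈ ℤ_[p]` with `‖q - 1‖ < 1`, and `x ∈ ℤ_[p]`, with `E` the `(h,q)`-Euler numbers
(determined by `q^h · Σ_{k≤n} C(n,k) E_k + E_n = 2·δ_{n,0}`) and
`E_n(x) = Σ_{l≤n} C(n,l) x^{n-l} E_l`, we have
`lim_N Σ_{y<p^N} (-1)^y q^{hy} (x+y)^n = E_n(x)`. -/
theorem witt_formula_hq_euler_polynomials (p : ℕ) [Fact p.Prime] (hp : Odd p)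
    (h : ℤ) (q : ℤ_[p]) (hq : ‖q - 1‖ < 1) (x : ℤ_[p]) (E : ℕ → ℚ_[p])
    (hE : ∀ n : ℕ,
      ((q : ℚ_[p]) ^ h) * (∑ k ∈ Finset.range (n + 1), (n.choose k : ℚ_[p]) * E k) + E n
        = 2 * if n = 0 then 1 else 0) :
    ∀ n : ℕ, Filter.Tendsto
      (fun N : ℕ => ∑ y ∈ Finset.range (p ^ N),
        (-1 : ℚ_[p]) ^ y * ((q : ℚ_[p]) ^ h) ^ y * ((x : ℚ_[p]) + (y : ℚ_[p])) ^ n)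
      Filter.atTop
      (nhds (∑ l ∈ Finset.range (n + 1), (n.choose l : ℚ_[p]) * (x : ℚ_[p]) ^ (n - l) * E l)) := by
  set Q : ℚ_[p] := (q : ℚ_[p]) ^ h
  have hodd (N : ℕ) : Odd (p ^ N) := hp.pow
  have hQ : Tendsto (fun N : ℕ => Q ^ p ^ N) atTop (𝓝 1) := by
    refine tendsto_zpow_pow_nhds_one ?_ h
    have hcoe : Tendsto (fun N : ℕ => ((q ^ p ^ N : ℤ_[p]) : ℚ_[p])) atTop
        (𝓝 ((1 : ℤ_[p]) : ℚ_[p])) :=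
      (continuous_subtype_val.tendsto _).comp
        (PadicInt.tendsto_pow_prime_pow_of_norm_sub_one_lt_one hq)
    simpa only [PadicInt.coe_pow, PadicInt.coe_one] using hcoe
  have hpN : Tendsto (fun N : ℕ => ((p ^ N : ℕ) : ℚ_[p])) atTop (𝓝 0) := by
    push_cast
    exact tendsto_pow_atTop_nhds_zero_of_norm_lt_one Padic.norm_p_lt_one
  have hS : ∀ m, Tendsto (fun N => weightedPowerSum (-Q) (p ^ N) m) atTop (𝓝 (E m)) := by
    refine tendsto_of_tendsto_binomial_recurrence (add_one_ne_zero_of_tendsto_pow_odd hodd hQ)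
      fun m => ?_
    simp only [weightedPowerSum_neg_recurrence Q (hodd _), hE, ← zero_pow_eq]
    convert tendsto_const_nhds.add (hQ.mul (hpN.pow m)) using 2
    ring
  intro n
  simp_rw [← neg_pow, sum_pow_mul_add_pow]
  exact tendsto_finsetSum _ fun l _ => tendsto_const_nhds.mul (hS l)
end

section
/- Let K be a field of characteristic zero, h an integer, q a nonzero element of K, and d an odd positive integer such that q^h ≠ −1 and q^{dh} ≠ −1. Then for every k ≥ 0 and every x ∈ K, the distribution relation E_{k,q}^{(h)}(x) = d^k · Σ_{a=0}^{d−1} (−1)^a q^{h a} E_{k,q^d}^{(h)}((x+a)/d) holds, where E_{k,q}^{(h)}(x) and E_{k,q^d}^{(h)}(y) are the (h,q)-Euler and (h,q^d)-Euler polynomials respectively. -/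
/-!
Writing `u = -c·eᵗ`, the recurrence says that the Euler numbers `G` for the parameter `c` have
exponential generating function `2 / (1 - u)`, and those `F` for `c^d` have `2 / (1 - u^d)`
after `t ↦ d t` (here `d` odd turns `(-c)^d` into `-c^d`). The geometric sum
`(1 - u^d) / (1 - u) = Σ_{a<d} u^a` then gives `egf G = egf F (d t) · Σ_{a<d} (-c)^a e^{a t}`,
and multiplying by `e^{x t}` and comparing coefficients is the distribution relation.
-/

open Finset PowerSeries
open scoped Nat

namespace EulerDistribution

variable {K : Type*} [Field K]

noncomputable def egf : (ℕ → K) →ₗ[K] K⟦X⟧ where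
  toFun a := mk fun n => a n / (n ! : K)
  map_add' a b := by ext; simp [add_div]
  map_smul' c a := by ext; simp [mul_div_assoc]

@[simp]
lemma coeff_egf (a : ℕ → K) (n : ℕ) : coeff n (egf a) = a n / (n ! : K) := by simp [egf]

lemma egf_injective [CharZero K] : Function.Injective (egf : (ℕ → K) → K⟦X⟧) := by
  intro a b hab
  funext n
  have hn := congrArg (coeff n) hab
  simp only [coeff_egf] at hn
  exact (div_left_inj' (Nat.cast_ne_zero.mpr n.factorial_ne_zero)).mp hn

lemma egf_mul [CharZero K] (a b : ℕ → K) :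
    egf a * egf b = egf fun n => ∑ l ∈ range (n + 1), (n.choose l : K) * a l * b (n - l) := by
  ext n
  rw [coeff_mul, Nat.sum_antidiagonal_eq_sum_range_succ_mk, coeff_egf, sum_div]
  refine sum_congr rfl fun l hl => ?_
  have hln : l ≤ n := Nat.le_of_lt_succ (mem_range.mp hl)
  have hchoose : (n.choose l : K) ≠ 0 := Nat.cast_ne_zero.mpr (Nat.choose_pos hln).ne'
  simp only [coeff_egf]
  rw [← Nat.choose_mul_factorial_mul_factorial hln]
  push_cast
  field_simp

lemma egf_pow [CharZero K] (r : K) : egf (fun n => r ^ n) = rescale r (exp K) := by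
  ext n
  simp [coeff_exp, div_eq_mul_inv]

lemma egf_pow_mul (r : K) (a : ℕ → K) : egf (fun n => r ^ n * a n) = rescale r (egf a) := by
  ext n
  simp [mul_div_assoc]

lemma rescale_C {R : Type*} [CommSemiring R] (a r : R) : rescale a (C r) = C r := by
  ext n
  rcases n with _ | n <;> simp [coeff_C]

def appell (G : ℕ → K) (x : K) (k : ℕ) : K :=
  ∑ l ∈ range (k + 1), (k.choose l : K) * x ^ (k - l) * G l

lemma egf_appell [CharZero K] (G : ℕ → K) (x : K) :
    egf (appell G x) = egf G * rescale x (exp K) := by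
  rw [← egf_pow, egf_mul]
  congr 1
  funext k
  exact sum_congr rfl fun l _ => by ring

lemma egf_pow_mul_appell_div [CharZero K] (G : ℕ → K) {d : K} (hd : d ≠ 0) (y : K) :
    egf (fun k => d ^ k * appell G (y / d) k) = rescale d (egf G) * rescale y (exp K) := by
  rw [egf_pow_mul, egf_appell, map_mul, rescale_rescale, div_mul_cancel₀ y hd]

/-- The `(h,q)`-Euler numbers are the case `c = q ^ h`. -/
def IsEulerNumbers (c : K) (G : ℕ → K) : Prop :=
  ∀ n : ℕ,
    c * (∑ k ∈ range (n + 1), (n.choose k : K) * G k) + G n = 2 * if n = 0 then 1 else 0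

lemma IsEulerNumbers.mul_egf [CharZero K] {c : K} {G : ℕ → K} (hG : IsEulerNumbers c G) :
    (C c * exp K + 1) * egf G = 2 := by
  have hconv : exp K * egf G = egf fun n => ∑ k ∈ range (n + 1), (n.choose k : K) * G k := by
    have hexp : exp K = egf fun _ => 1 := by simpa using (egf_pow (1 : K)).symm
    rw [mul_comm, hexp, egf_mul]
    simp
  ext n
  rw [add_mul, mul_assoc, hconv, one_mul, ← smul_eq_C_mul, ← map_smul, ← map_add, coeff_egf]
  simp only [Pi.add_apply, Pi.smul_apply, smul_eq_mul, hG n]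
  rw [← map_ofNat C 2, coeff_C]
  split_ifs <;> simp_all

lemma IsEulerNumbers.egf_eq_rescale_mul_geom_sum [CharZero K] {c : K} (hc : c ≠ -1) {d : ℕ}
    (hd : Odd d) {G F : ℕ → K} (hG : IsEulerNumbers c G) (hF : IsEulerNumbers (c ^ d) F) :
    egf G = rescale (d : K) (egf F) * ∑ a ∈ range d, (-(C c * exp K)) ^ a := by
  set u : K⟦X⟧ := -(C c * exp K) with hu
  have hGu : (1 - u) * egf G = 2 := by
    rw [hu, sub_neg_eq_add, add_comm]
    exact hG.mul_egf
  have hFu : (1 - u ^ d) * rescale (d : K) (egf F) = 2 := by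
    have hFd := congrArg (rescale (d : K)) hF.mul_egf
    rw [map_mul, map_add, map_mul, rescale_C, ← exp_pow_eq_rescale_exp, map_one, map_ofNat] at hFd
    rw [hu, hd.neg_pow, mul_pow, ← map_pow, sub_neg_eq_add, add_comm]
    exact hFd
  have hu1 : 1 - u ≠ 0 := by
    intro h
    have h0 := congrArg constantCoeff h
    simp only [hu, sub_neg_eq_add, map_add, map_one, map_mul, constantCoeff_C, constantCoeff_exp,
      mul_one, map_zero] at h0
    exact hc (eq_neg_of_add_eq_zero_right h0)
  apply mul_left_cancel₀ hu1
  rw [hGu, mul_left_comm, mul_neg_geom_sum, mul_comm, hFu]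

lemma IsEulerNumbers.appell_eq_sum [CharZero K] {c : K} (hc : c ≠ -1) {d : ℕ} (hd : Odd d)
    {G F : ℕ → K} (hG : IsEulerNumbers c G) (hF : IsEulerNumbers (c ^ d) F) (x : K) (k : ℕ) :
    appell G x k =
      (d : K) ^ k * ∑ a ∈ range d, (-1 : K) ^ a * c ^ a * appell F ((x + a) / d) k := by
  suffices h : egf (appell G x) = egf fun n =>
      (d : K) ^ n * ∑ a ∈ range d, (-1 : K) ^ a * c ^ a * appell F ((x + a) / d) n from
    congrFun (egf_injective h) k
  have hd0 : (d : K) ≠ 0 := Nat.cast_ne_zero.mpr hd.pos.ne'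
  have hsum :
      (fun n => (d : K) ^ n * ∑ a ∈ range d, (-1 : K) ^ a * c ^ a * appell F ((x + a) / d) n) =
        ∑ a ∈ range d,
          ((-1 : K) ^ a * c ^ a) • fun n => (d : K) ^ n * appell F ((x + a) / d) n := by
    funext n
    simp only [Finset.sum_apply, Pi.smul_apply, smul_eq_mul, mul_sum]
    exact sum_congr rfl fun a _ => by ring
  rw [hsum, map_sum, egf_appell, hG.egf_eq_rescale_mul_geom_sum hc hd hF, mul_sum, sum_mul]
  refine sum_congr rfl fun a _ => ?_
  rw [map_smul, egf_pow_mul_appell_div _ hd0, ← exp_mul_exp_eq_exp_add,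
    ← exp_pow_eq_rescale_exp, smul_eq_C_mul, neg_pow, mul_pow]
  simp only [map_mul, map_pow, map_neg, map_one]
  ring

end EulerDistribution

theorem distribution_relation_hq_euler_general (K : Type*) [Field K] [CharZero K]
    (h : ℤ) (q : K) (d : ℕ) (hd : Odd d)
    (hqh : q ^ h ≠ -1)
    (E F : ℕ → K)
    (hE : ∀ n : ℕ,
      q ^ h * (∑ k ∈ Finset.range (n + 1), (n.choose k : K) * E k) + E n
        = 2 * if n = 0 then 1 else 0)
    (hF : ∀ n : ℕ,
      (q ^ d) ^ h * (∑ k ∈ Finset.range (n + 1), (n.choose k : K) * F k) + F n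
        = 2 * if n = 0 then 1 else 0) :
    ∀ (k : ℕ) (x : K),
      (∑ l ∈ Finset.range (k + 1), (k.choose l : K) * x ^ (k - l) * E l)
        = (d : K) ^ k * ∑ a ∈ Finset.range d, (-1 : K) ^ a * (q ^ h) ^ a *
            ∑ l ∈ Finset.range (k + 1),
              (k.choose l : K) * ((x + a) / d) ^ (k - l) * F l := by
  have hpow : (q ^ d) ^ h = (q ^ h) ^ d := by
    rw [← zpow_natCast, ← zpow_natCast, ← zpow_mul, ← zpow_mul, mul_comm]
  rw [hpow] at hF
  exact fun k x => EulerDistribution.IsEulerNumbers.appell_eq_sum hqh hd hE hF x k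

/-- Distribution relation for the `(h,q)`-Euler polynomials. Over a field `K` of
characteristic zero, with `q ≠ 0`, `d` odd and positive, `q^h ≠ -1` and `q^{dh} ≠ -1`,
letting `E` (resp. `F`) be the `(h,q)`-Euler (resp. `(h,q^d)`-Euler) numbers defined by
the recurrence `q^h Σ_{k≤n} C(n,k) E_k + E_n = 2 δ_{n,0}` (resp. with `q^d` in place of
`q`), and with the associated Euler polynomials `E_k(x) = Σ_{l≤k} C(k,l) x^{k-l} E_l`,
we have `E_{k,q}^{(h)}(x) = d^k Σ_{a=0}^{d-1} (-1)^a q^{ha} E_{k,q^d}^{(h)}((x+a)/d)`. -/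
theorem distribution_relation_hq_euler (K : Type*) [Field K] [CharZero K]
    (h : ℤ) (q : K) (hq : q ≠ 0) (d : ℕ) (hdpos : 0 < d) (hd : Odd d)
    (hqh : q ^ h ≠ -1) (hqdh : q ^ ((d : ℤ) * h) ≠ -1)
    (E F : ℕ → K)
    (hE : ∀ n : ℕ,
      q ^ h * (∑ k ∈ Finset.range (n + 1), (n.choose k : K) * E k) + E n
        = 2 * if n = 0 then 1 else 0)
    (hF : ∀ n : ℕ,
      (q ^ d) ^ h * (∑ k ∈ Finset.range (n + 1), (n.choose k : K) * F k) + F n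
        = 2 * if n = 0 then 1 else 0) :
    ∀ (k : ℕ) (x : K),
      (∑ l ∈ Finset.range (k + 1), (k.choose l : K) * x ^ (k - l) * E l)
        = (d : K) ^ k * ∑ a ∈ Finset.range d, (-1 : K) ^ a * (q ^ h) ^ a *
            ∑ l ∈ Finset.range (k + 1),
              (k.choose l : K) * ((x + a) / d) ^ (k - l) * F l :=
  distribution_relation_hq_euler_general K h q d hd hqh E F hE hF
end

section
/- Let K be a field of characteristic zero, h an integer, q a nonzero element of K with q^h ≠ −1, v ≥ 1 an integer, and z ∈ K. Then for every n ≥ 0, E_{n,q}^{(h,v)}(z) = Σ_{m=0}^{n} Σ_{l_1,…,l_v ≥ 0, l_1+⋯+l_v = m} C(n,m) · (m choose l_1,…,l_v) · z^{n−m} · Π_{j=1}^{v} E_{l_j,q}^{(h)}, where C(n,m) is the binomial coefficient and (m choose l_1,…,l_v) = m!/(l_1!⋯l_v!) is the multinomial coefficient. -/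
/-!
The exponential generating function of `E^{(h,v)}_{n,q}(z)` is `(2 / (q^h e^t + 1))^v e^{tz}`,
the `v`-th power of the EGF of the Euler numbers times the EGF of `z^n`; the constant term
`q^h + 1 ≠ 0` makes `q^h e^t + 1` cancellable. Coefficients of a product of EGFs are
binomial convolutions, and those of a product of `v` EGFs are multinomial convolutions.
-/

open Finset PowerSeries Nat

namespace Finset

theorem sum_finsuppAntidiag_eq_sum_piAntidiag {ι μ M : Type*} [DecidableEq ι]
    [AddCommMonoid μ] [HasAntidiagonal μ] [DecidableEq μ] [AddCommMonoid M]
    (s : Finset ι) (n : μ) (g : (ι → μ) → M) :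
    ∑ l ∈ finsuppAntidiag s n, g l = ∑ f ∈ piAntidiag s n, g f := by
  rw [finsuppAntidiag, sum_map, ← sum_attach (piAntidiag s n)]
  rfl

theorem piAntidiag_univ_eq_filter_piFinset {ι : Type*} [Fintype ι] [DecidableEq ι]
    (m : ℕ) :
    piAntidiag univ m = (Fintype.piFinset fun _ : ι => range (m + 1)).filter
      (fun l => ∑ i, l i = m) := by
  ext l
  simp only [mem_piAntidiag, mem_univ, implies_true, and_true, mem_filter,
    Fintype.mem_piFinset, mem_range, iff_and_self]
  rintro rfl i
  exact Nat.lt_succ_of_le (single_le_sum (fun j _ => Nat.zero_le (l j)) (mem_univ i))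

end Finset

namespace PowerSeries

variable {K : Type*} [Field K]

def egf (a : ℕ → K) : K⟦X⟧ := PowerSeries.mk fun n => a n / n !

@[simp]
theorem coeff_egf (a : ℕ → K) (n : ℕ) : coeff n (egf a) = a n / n ! := coeff_mk _ _

variable [CharZero K]

theorem egf_injective : Function.Injective (egf : (ℕ → K) → K⟦X⟧) := by
  intro a b hab
  funext n
  have := congrArg (coeff n) hab
  simp only [coeff_egf] at this
  exact (div_left_inj' (Nat.cast_ne_zero.2 n.factorial_ne_zero)).1 this

theorem egf_mul (a b : ℕ → K) :
    egf a * egf b =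
      egf fun n => ∑ p ∈ antidiagonal n, (n.choose p.1 : K) * a p.1 * b p.2 := by
  ext n
  rw [coeff_mul, coeff_egf, sum_div]
  refine sum_congr rfl fun p hp => ?_
  obtain rfl := mem_antidiagonal.1 hp
  have : ((p.1 + p.2)! : K) ≠ 0 := Nat.cast_ne_zero.2 (factorial_ne_zero _)
  simp only [coeff_egf, Nat.cast_add_choose]
  field_simp

theorem prod_egf {ι : Type*} [Fintype ι] [DecidableEq ι] (a : ι → ℕ → K) :
    ∏ i, egf (a i) =
      egf fun m => ∑ l ∈ piAntidiag univ m, (multinomial univ l : K) * ∏ i, a i (l i) := by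
  ext m
  rw [coeff_prod,
    sum_finsuppAntidiag_eq_sum_piAntidiag (g := fun l => ∏ i, coeff (l i) (egf (a i))),
    coeff_egf, sum_div]
  refine sum_congr rfl fun l hl => ?_
  obtain ⟨rfl, -⟩ := mem_piAntidiag.1 hl
  have hspec : ((∏ i, (l i)! : ℕ) : K) * multinomial univ l = (∑ i, l i)! := by
    exact_mod_cast multinomial_spec univ l
  have : (multinomial univ l : K) ≠ 0 := Nat.cast_ne_zero.2 (multinomial_pos _ _).ne'
  simp only [coeff_egf, prod_div_distrib]
  rw [← hspec]
  push_cast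
  field_simp

theorem egf_pow (a : ℕ → K) (v : ℕ) :
    egf a ^ v =
      egf fun m =>
        ∑ l ∈ piAntidiag univ m, (multinomial univ l : K) * ∏ j : Fin v, a (l j) := by
  rw [← prod_egf, Fin.prod_const]

end PowerSeries

theorem higher_order_hq_euler_poly_complete_sum_general (K : Type*) [Field K] [CharZero K]
    (h : ℤ) (q : K) (hqh : q ^ h ≠ -1) (v : ℕ) (z : K)
    (E₁ : ℕ → K) (Ev : K → ℕ → K)
    (hE₁ : (PowerSeries.C (q ^ h) * PowerSeries.exp K + 1) *
        PowerSeries.mk (fun n => E₁ n / n.factorial) = PowerSeries.C (2 : K))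
    (hEv : ∀ w : K,
      (PowerSeries.C (q ^ h) * PowerSeries.exp K + 1) ^ v *
          PowerSeries.mk (fun n => Ev w n / n.factorial)
        = PowerSeries.C ((2 : K) ^ v) * PowerSeries.mk (fun n => w ^ n / n.factorial)) :
    ∀ n : ℕ, Ev z n =
      ∑ m ∈ Finset.range (n + 1),
        ∑ l ∈ (Fintype.piFinset fun _ : Fin v => Finset.range (m + 1)).filter
            (fun l => ∑ j, l j = m),
          (n.choose m : K) * (Nat.multinomial Finset.univ l : K) * z ^ (n - m) *
            ∏ j, E₁ (l j) := by
  intro n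
  set A := C (q ^ h) * exp K + 1
  have hA : A ≠ 0 := fun hA0 => hqh <| eq_neg_of_add_eq_zero_left <| by
    simpa [A] using congrArg constantCoeff hA0
  have hEv_egf : egf (Ev z) = egf E₁ ^ v * egf (z ^ ·) := by
    refine mul_left_cancel₀ (pow_ne_zero v hA) ?_
    calc A ^ v * egf (Ev z) = C (2 ^ v) * egf (z ^ ·) := hEv z
      _ = (A * egf E₁) ^ v * egf (z ^ ·) := by rw [show A * egf E₁ = C 2 from hE₁, map_pow]
      _ = A ^ v * (egf E₁ ^ v * egf (z ^ ·)) := by rw [mul_pow, mul_assoc]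
  rw [egf_pow, egf_mul] at hEv_egf
  rw [congrFun (egf_injective hEv_egf) n, Nat.sum_antidiagonal_eq_sum_range_succ_mk]
  refine sum_congr rfl fun m _ => ?_
  rw [← piAntidiag_univ_eq_filter_piFinset, mul_sum, sum_mul]
  exact sum_congr rfl fun l _ => by dsimp only; ring

/-- Over a field `K` of characteristic zero, with `q ≠ 0`, `q^h ≠ -1`, `v ≥ 1` and
`z ∈ K`, let `E₁` be the `(h,q)`-Euler numbers (EGF `2/(q^h e^t + 1)`) and `Ev z` the
higher-order `(h,q)`-Euler polynomials (EGF via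
`(q^h e^t + 1)^v · Σ_n Ev z n t^n/n! = 2^v e^{tz}`). Then
`Ev z n = Σ_{m≤n} Σ_{l₁+⋯+l_v=m} C(n,m) (m choose l₁,…,l_v) z^{n-m} Π_j E₁ (l j)`. -/
theorem higher_order_hq_euler_poly_complete_sum (K : Type*) [Field K] [CharZero K]
    (h : ℤ) (q : K) (hq : q ≠ 0) (hqh : q ^ h ≠ -1) (v : ℕ) (hv : 1 ≤ v) (z : K)
    (E₁ : ℕ → K) (Ev : K → ℕ → K)
    (hE₁ : (PowerSeries.C (q ^ h) * PowerSeries.exp K + 1) *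
        PowerSeries.mk (fun n => E₁ n / n.factorial) = PowerSeries.C (2 : K))
    (hEv : ∀ w : K,
      (PowerSeries.C (q ^ h) * PowerSeries.exp K + 1) ^ v *
          PowerSeries.mk (fun n => Ev w n / n.factorial)
        = PowerSeries.C ((2 : K) ^ v) * PowerSeries.mk (fun n => w ^ n / n.factorial)) :
    ∀ n : ℕ, Ev z n =
      ∑ m ∈ Finset.range (n + 1),
        ∑ l ∈ (Fintype.piFinset fun _ : Fin v => Finset.range (m + 1)).filter
            (fun l => ∑ j, l j = m),
          (n.choose m : K) * (Nat.multinomial Finset.univ l : K) * z ^ (n - m) *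
            ∏ j, E₁ (l j) :=
  higher_order_hq_euler_poly_complete_sum_general K h q hqh v z E₁ Ev hE₁ hEv
end

section
/- Let K be a field of characteristic zero, h an integer, q a nonzero element of K with q^h ≠ −1, v ≥ 1 an integer, and y, z ∈ K. Then for every n ≥ 0, the addition theorem E_{n,q}^{(h,v)}(z + y) = Σ_{l=0}^{n} C(n,l) E_{l,q}^{(h,v)}(y) z^{n−l} holds, where C(n,l) is the binomial coefficient. -/
/-!
Both `E(z + y)` and `E y` solve `F · G = 2^v e^{wt}` for the same nonzero series
`F = (q^h e^t + 1)^v`, with `w = z + y` and `w = y`. Since `e^{(z+y)t} = e^{yt} e^{zt}` and power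
series over a field form a domain, the generating function of `E(z + y)` is that of `E y` times
`e^{zt}`; comparing coefficients of `t^n / n!` gives the binomial convolution.
-/

open Nat PowerSeries

namespace PowerSeries

variable {K : Type*} [Field K] [CharZero K]

theorem mk_pow_div_factorial_eq_rescale_exp (w : K) :
    mk (fun n => w ^ n / n !) = rescale w (exp K) := by
  ext n
  simp [coeff_exp, div_eq_mul_inv]

theorem C_mul_exp_add_one_ne_zero {a : K} (ha : a ≠ -1) : C a * exp K + 1 ≠ 0 := by
  intro h
  apply ha
  have := congrArg constantCoeff h
  simp only [map_add, map_mul, constantCoeff_C, constantCoeff_exp, mul_one, map_one,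
    map_zero] at this
  exact eq_neg_of_add_eq_zero_left this

theorem coeff_mk_div_factorial_mul_mk_div_factorial (a b : ℕ → K) (n : ℕ) :
    coeff n (mk (fun n => a n / n !) * mk (fun n => b n / n !)) =
      (∑ l ∈ Finset.range (n + 1), (n.choose l : K) * a l * b (n - l)) / n ! := by
  rw [coeff_mul, Finset.Nat.sum_antidiagonal_eq_sum_range_succ_mk, Finset.sum_div]
  refine Finset.sum_congr rfl fun l hl => ?_
  have hln : l ≤ n := Nat.lt_succ_iff.mp (Finset.mem_range.mp hl)
  simp only [coeff_mk]
  rw [Nat.cast_choose K hln]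
  have := l.factorial_ne_zero
  have := (n - l).factorial_ne_zero
  have := n.factorial_ne_zero
  field_simp

theorem mk_div_factorial_add_eq_mul_rescale_exp {F : K⟦X⟧} (hF : F ≠ 0) (c : K)
    (E : K → ℕ → K) (hE : ∀ w, F * mk (fun n => E w n / n !) = C c * rescale w (exp K))
    (y z : K) :
    mk (fun n => E (z + y) n / n !) = mk (fun n => E y n / n !) * rescale z (exp K) := by
  apply mul_left_cancel₀ hF
  rw [hE, ← mul_assoc, hE, mul_assoc, exp_mul_exp_eq_exp_add, add_comm y z]

end PowerSeries

theorem addition_theorem_higher_order_hq_euler_general (K : Type*) [Field K] [CharZero K]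
    (h : ℤ) (q : K) (hqh : q ^ h ≠ -1) (v : ℕ) (y z : K)
    (Ev : K → ℕ → K)
    (hEv : ∀ w : K,
      (PowerSeries.C (q ^ h) * PowerSeries.exp K + 1) ^ v *
          PowerSeries.mk (fun n => Ev w n / n.factorial)
        = PowerSeries.C ((2 : K) ^ v) * PowerSeries.mk (fun n => w ^ n / n.factorial)) :
    ∀ n : ℕ, Ev (z + y) n =
      ∑ l ∈ Finset.range (n + 1), (n.choose l : K) * Ev y l * z ^ (n - l) := by
  intro n
  simp only [mk_pow_div_factorial_eq_rescale_exp] at hEv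
  have hgen := mk_div_factorial_add_eq_mul_rescale_exp
    (pow_ne_zero v (C_mul_exp_add_one_ne_zero hqh)) _ Ev hEv y z
  rw [← mk_pow_div_factorial_eq_rescale_exp] at hgen
  have hcoeff := congrArg (coeff n) hgen
  rw [coeff_mk, coeff_mk_div_factorial_mul_mk_div_factorial] at hcoeff
  exact (div_left_inj' (Nat.cast_ne_zero.mpr n.factorial_ne_zero)).mp hcoeff

/-- Addition theorem for the higher-order `(h,q)`-Euler polynomials. Over a field `K`
of characteristic zero, with `q ≠ 0`, `q^h ≠ -1` and `v ≥ 1`, let `Ev w` be the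
higher-order `(h,q)`-Euler polynomials (EGF via
`(q^h e^t + 1)^v · Σ_n Ev w n t^n/n! = 2^v e^{tw}`). Then for `y, z ∈ K`,
`Ev (z + y) n = Σ_{l≤n} C(n,l) Ev y l z^{n-l}`. -/
theorem addition_theorem_higher_order_hq_euler (K : Type*) [Field K] [CharZero K]
    (h : ℤ) (q : K) (hq : q ≠ 0) (hqh : q ^ h ≠ -1) (v : ℕ) (hv : 1 ≤ v) (y z : K)
    (Ev : K → ℕ → K)
    (hEv : ∀ w : K,
      (PowerSeries.C (q ^ h) * PowerSeries.exp K + 1) ^ v *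
          PowerSeries.mk (fun n => Ev w n / n.factorial)
        = PowerSeries.C ((2 : K) ^ v) * PowerSeries.mk (fun n => w ^ n / n.factorial)) :
    ∀ n : ℕ, Ev (z + y) n =
      ∑ l ∈ Finset.range (n + 1), (n.choose l : K) * Ev y l * z ^ (n - l) :=
  addition_theorem_higher_order_hq_euler_general K h q hqh v y z Ev hEv
end
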